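/- Let M be the 3-valued matrix with values {1,2,3}, designated values {1,3}, negation ¬1=3, ¬2=3, ¬3=2, and binary operations (x,y) ↦ (x∨y, x∧dy, x⊃y): (1,1)↦(3,1,1), (1,2)↦(1,2,2), (1,3)↦(3,1,3), (2,1)↦(1,2,3), (2,2)↦(2,2,1), (2,3)↦(3,2,3), (3,1)↦(1,3,1), (3,2)↦(3,2,2), (3,3)↦(1,3,3). Then M validates all axiom schemes C1–C15, the designated values are closed under modus ponens for ⊃, and there exist values a,b such that ¬(¬¬a ∨ b) ⊃ ¬(a ∨ b) is not designated. Consequently the scheme ¬(¬¬α∨β) ⊃ ¬(α∨β) (axiom D15) is not derivable in the system C. -/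
import Mathlib


inductive Fm where
  | atom : Nat → Fm
  | neg : Fm → Fm
  | or : Fm → Fm → Fm
  | dand : Fm → Fm → Fm
  | dimp : Fm → Fm → Fm

inductive CProv : Fm → Prop where
  | mp {a b : Fm} : CProv (.dimp a b) → CProv a → CProv b
  | ax1 {a b : Fm} : CProv (.dimp (a) (.dimp (b) (a)))
  | ax2 {a b c : Fm} : CProv (.dimp (.dimp (a) (.dimp (b) (c))) (.dimp (.dimp (a) (b)) (.dimp (a) (c))))
  | ax3 {a b : Fm} : CProv (.dimp (.dand (a) (b)) (a))
  | ax4 {a b : Fm} : CProv (.dimp (.dand (a) (b)) (b))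
  | ax5 {a b : Fm} : CProv (.dimp (a) (.dimp (b) (.dand (a) (b))))
  | ax6 {a b : Fm} : CProv (.dimp (a) (.or (a) (b)))
  | ax7 {a b : Fm} : CProv (.dimp (b) (.or (a) (b)))
  | ax8 {a b c : Fm} : CProv (.dimp (.dimp (a) (c)) (.dimp (.dimp (b) (c)) (.dimp (.or (a) (b)) (c))))
  | ax9 {a b : Fm} : CProv (.or (a) (.dimp (a) (b)))
  | ax10 {a : Fm} : CProv (.neg (.dand (.neg (a)) (.dand (.neg (.neg (a))) (.neg (.or (a) (.neg (a)))))))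
  | ax11 {a b c : Fm} : CProv (.dimp (.neg (.dand (.neg (a)) (.dand (.neg (b)) (.neg (.or (a) (b)))))) (.neg (.dand (.neg (a)) (.dand (.neg (b)) (.dand (.neg (c)) (.neg (.or (a) (.or (b) (c)))))))))
  | ax12 {a b c : Fm} : CProv (.dimp (.neg (.dand (.neg (a)) (.dand (.neg (b)) (.dand (.neg (c)) (.neg (.or (a) (.or (b) (c)))))))) (.neg (.dand (.neg (a)) (.dand (.neg (c)) (.dand (.neg (b)) (.neg (.or (a) (.or (c) (b)))))))))
  | ax13 {a b c : Fm} : CProv (.dimp (.neg (.dand (.neg (a)) (.dand (.neg (b)) (.dand (.neg (c)) (.neg (.or (a) (.or (b) (c)))))))) (.dimp (.or (a) (.or (b) (.neg (c)))) (.or (a) (b))))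
  | ax14 {a b : Fm} : CProv (.dimp (.neg (.dand (.neg (a)) (.neg (b)))) (.or (a) (b)))
  | ax15 {a b : Fm} : CProv (.dimp (.or (a) (.or (b) (.neg (b)))) (.neg (.dand (.neg (a)) (.neg (.or (b) (.neg (b)))))))

def vneg : Fin 3 → Fin 3 := ![2, 2, 1]

def vor : Fin 3 → Fin 3 → Fin 3 := ![![2, 0, 2], ![0, 1, 2], ![0, 2, 0]]

def vand : Fin 3 → Fin 3 → Fin 3 := ![![0, 1, 0], ![1, 1, 1], ![2, 1, 2]]

def vimp : Fin 3 → Fin 3 → Fin 3 := ![![0, 1, 2], ![2, 0, 2], ![0, 1, 2]]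

def Des (x : Fin 3) : Prop := x ≠ 1


theorem L1 : ∀ a b : Fin 3, Des (vimp (a) (vimp (b) (a))) := by unfold Des; decide

theorem L2 : ∀ a b c : Fin 3, Des (vimp (vimp (a) (vimp (b) (c))) (vimp (vimp (a) (b)) (vimp (a) (c)))) := by unfold Des; decide

theorem L3 : ∀ a b : Fin 3, Des (vimp (vand (a) (b)) (a)) := by unfold Des; decide

theorem L4 : ∀ a b : Fin 3, Des (vimp (vand (a) (b)) (b)) := by unfold Des; decide

theorem L5 : ∀ a b : Fin 3, Des (vimp (a) (vimp (b) (vand (a) (b)))) := by unfold Des; decide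

theorem L6 : ∀ a b : Fin 3, Des (vimp (a) (vor (a) (b))) := by unfold Des; decide

theorem L7 : ∀ a b : Fin 3, Des (vimp (b) (vor (a) (b))) := by unfold Des; decide

theorem L8 : ∀ a b c : Fin 3, Des (vimp (vimp (a) (c)) (vimp (vimp (b) (c)) (vimp (vor (a) (b)) (c)))) := by unfold Des; decide

theorem L9 : ∀ a b : Fin 3, Des (vor (a) (vimp (a) (b))) := by unfold Des; decide

theorem L10 : ∀ a : Fin 3, Des (vneg (vand (vneg (a)) (vand (vneg (vneg (a))) (vneg (vor (a) (vneg (a))))))) := by unfold Des; decide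

theorem L11 : ∀ a b c : Fin 3, Des (vimp (vneg (vand (vneg (a)) (vand (vneg (b)) (vneg (vor (a) (b)))))) (vneg (vand (vneg (a)) (vand (vneg (b)) (vand (vneg (c)) (vneg (vor (a) (vor (b) (c))))))))) := by unfold Des; decide

theorem L12 : ∀ a b c : Fin 3, Des (vimp (vneg (vand (vneg (a)) (vand (vneg (b)) (vand (vneg (c)) (vneg (vor (a) (vor (b) (c)))))))) (vneg (vand (vneg (a)) (vand (vneg (c)) (vand (vneg (b)) (vneg (vor (a) (vor (c) (b))))))))) := by unfold Des; decide

theorem L13 : ∀ a b c : Fin 3, Des (vimp (vneg (vand (vneg (a)) (vand (vneg (b)) (vand (vneg (c)) (vneg (vor (a) (vor (b) (c)))))))) (vimp (vor (a) (vor (b) (vneg (c)))) (vor (a) (b)))) := by unfold Des; decide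

theorem L14 : ∀ a b : Fin 3, Des (vimp (vneg (vand (vneg (a)) (vneg (b)))) (vor (a) (b))) := by unfold Des; decide

theorem L15 : ∀ a b : Fin 3, Des (vimp (vor (a) (vor (b) (vneg (b)))) (vneg (vand (vneg (a)) (vneg (vor (b) (vneg (b))))))) := by unfold Des; decide

theorem Lmp : ∀ x y : Fin 3, Des x → Des (vimp x y) → Des y := by unfold Des; decide

def evalFm : Fm → Fin 3
  | .atom _ => 0
  | .neg a => vneg (evalFm a)
  | .or a b => vor (evalFm a) (evalFm b)
  | .dand a b => vand (evalFm a) (evalFm b)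
  | .dimp a b => vimp (evalFm a) (evalFm b)

theorem sound {f : Fm} (h : CProv f) : Des (evalFm f) := by
  induction h with
  | mp _ _ ih1 ih2 => simp only [evalFm] at ih1; exact Lmp _ _ ih2 ih1
  | ax1 => exact L1 _ _
  | ax2 => exact L2 _ _ _
  | ax3 => exact L3 _ _
  | ax4 => exact L4 _ _
  | ax5 => exact L5 _ _
  | ax6 => exact L6 _ _
  | ax7 => exact L7 _ _
  | ax8 => exact L8 _ _ _
  | ax9 => exact L9 _ _
  | ax10 => exact L10 _
  | ax11 => exact L11 _ _ _
  | ax12 => exact L12 _ _ _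
  | ax13 => exact L13 _ _ _
  | ax14 => exact L14 _ _
  | ax15 => exact L15 _ _

theorem stmt4 :
    (∀ a b : Fin 3, Des (vimp (a) (vimp (b) (a)))) ∧
    (∀ a b c : Fin 3, Des (vimp (vimp (a) (vimp (b) (c))) (vimp (vimp (a) (b)) (vimp (a) (c))))) ∧
    (∀ a b : Fin 3, Des (vimp (vand (a) (b)) (a))) ∧
    (∀ a b : Fin 3, Des (vimp (vand (a) (b)) (b))) ∧
    (∀ a b : Fin 3, Des (vimp (a) (vimp (b) (vand (a) (b))))) ∧
    (∀ a b : Fin 3, Des (vimp (a) (vor (a) (b)))) ∧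
    (∀ a b : Fin 3, Des (vimp (b) (vor (a) (b)))) ∧
    (∀ a b c : Fin 3, Des (vimp (vimp (a) (c)) (vimp (vimp (b) (c)) (vimp (vor (a) (b)) (c))))) ∧
    (∀ a b : Fin 3, Des (vor (a) (vimp (a) (b)))) ∧
    (∀ a : Fin 3, Des (vneg (vand (vneg (a)) (vand (vneg (vneg (a))) (vneg (vor (a) (vneg (a)))))))) ∧
    (∀ a b c : Fin 3, Des (vimp (vneg (vand (vneg (a)) (vand (vneg (b)) (vneg (vor (a) (b)))))) (vneg (vand (vneg (a)) (vand (vneg (b)) (vand (vneg (c)) (vneg (vor (a) (vor (b) (c)))))))))) ∧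
    (∀ a b c : Fin 3, Des (vimp (vneg (vand (vneg (a)) (vand (vneg (b)) (vand (vneg (c)) (vneg (vor (a) (vor (b) (c)))))))) (vneg (vand (vneg (a)) (vand (vneg (c)) (vand (vneg (b)) (vneg (vor (a) (vor (c) (b)))))))))) ∧
    (∀ a b c : Fin 3, Des (vimp (vneg (vand (vneg (a)) (vand (vneg (b)) (vand (vneg (c)) (vneg (vor (a) (vor (b) (c)))))))) (vimp (vor (a) (vor (b) (vneg (c)))) (vor (a) (b))))) ∧
    (∀ a b : Fin 3, Des (vimp (vneg (vand (vneg (a)) (vneg (b)))) (vor (a) (b)))) ∧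
    (∀ a b : Fin 3, Des (vimp (vor (a) (vor (b) (vneg (b)))) (vneg (vand (vneg (a)) (vneg (vor (b) (vneg (b)))))))) ∧
    (∀ x y : Fin 3, Des x → Des (vimp x y) → Des y) ∧
    (∃ a b : Fin 3, ¬ Des (vimp (vneg (vor (vneg (vneg (a))) (b))) (vneg (vor (a) (b))))) ∧
    ¬ (∀ a b : Fm, CProv (.dimp (.neg (.or (.neg (.neg (a))) (b))) (.neg (.or (a) (b))))) := by
  refine ⟨L1, L2, L3, L4, L5, L6, L7, L8, L9, L10, L11, L12, L13, L14, L15,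
    fun x y hx h => Lmp x y hx h, ⟨0, 0, by unfold Des; decide⟩, ?_⟩
  intro h
  have hs := sound (h (.atom 0) (.atom 0))
  simp only [evalFm] at hs
  revert hs; unfold Des; decide
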